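/- arXiv:1605.09508 — 2 statements merged into one kernel-verified Lean document; each statement's English description precedes it below -/
import Mathlib

section
/- For every real number X > 0, the number of positive integers n ≤ X with h(n) = 2 is strictly less than X/2 + (3/2 + √2)·√X + 1 + (3√2)/2. -/
/-- The set `A_n` of pairs `(x, y)` of positive integers with `n = x(x+y)` and `1 ≤ y ≤ x-1`. -/
def lerchA (n : ℕ) : Finset (ℕ × ℕ) :=
  (Finset.range (n + 1) ×ˢ Finset.range (n + 1)).filter
    (fun p => 0 < p.1 ∧ 1 ≤ p.2 ∧ p.2 ≤ p.1 - 1 ∧ n = p.1 * (p.1 + p.2))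

/-- The set `B_n` of positive integers `x` with `n = x²`. -/
def lerchB (n : ℕ) : Finset ℕ :=
  (Finset.range (n + 1)).filter (fun x => 0 < x ∧ n = x ^ 2)

/-- The set `C_n` of positive integers `x` with `n = 2x²`. -/
def lerchC (n : ℕ) : Finset ℕ :=
  (Finset.range (n + 1)).filter (fun x => 0 < x ∧ n = 2 * x ^ 2)

/-- `h(n) = 2·|A_n| + |B_n| + |C_n|`, the `n`-th coefficient of the half Lerch sum. -/
def lerchh (n : ℕ) : ℕ := 2 * (lerchA n).card + (lerchB n).card + (lerchC n).card

/-!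
If `h(n) = 2` then `A_n` is nonempty, since `B_n` and `C_n` have at most one element each and
cannot both be nonempty (`√2` is irrational). So `n = x(x + y)` with `1 ≤ y < x` and `x² < n ≤ X`,
and the pairs `(x, y)` with `1 ≤ y < x ≤ √X` number at most `X/2`.
-/

open Finset

theorem sq_ne_two_mul_sq {x y : ℕ} (hy : y ≠ 0) : x ^ 2 ≠ 2 * y ^ 2 := by
  intro h
  refine irrational_sqrt_two.ne_rat (x / y) ?_
  rw [Real.sqrt_eq_iff_eq_sq (by norm_num) (by positivity)]
  push_cast
  field_simp
  exact_mod_cast h.symm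

theorem card_lerchB_le_one (n : ℕ) : #(lerchB n) ≤ 1 := by
  refine card_le_one.2 fun a ha b hb => ?_
  simp only [lerchB, mem_filter] at ha hb
  exact (Nat.pow_left_injective two_ne_zero) (ha.2.2.symm.trans hb.2.2)

theorem card_lerchC_le_one (n : ℕ) : #(lerchC n) ≤ 1 := by
  refine card_le_one.2 fun a ha b hb => ?_
  simp only [lerchC, mem_filter] at ha hb
  exact (Nat.pow_left_injective two_ne_zero) (show a ^ 2 = b ^ 2 by omega)

theorem card_lerchB_add_card_lerchC_le_one (n : ℕ) : #(lerchB n) + #(lerchC n) ≤ 1 := by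
  rcases (lerchB n).eq_empty_or_nonempty with hB | ⟨x, hx⟩
  · simpa [hB] using card_lerchC_le_one n
  rcases (lerchC n).eq_empty_or_nonempty with hC | ⟨y, hy⟩
  · simpa [hC] using card_lerchB_le_one n
  simp only [lerchB, lerchC, mem_filter] at hx hy
  exact absurd (hx.2.2.symm.trans hy.2.2) (sq_ne_two_mul_sq hy.2.1.ne')

theorem lerchA_nonempty_of_lerchh_eq_two {n : ℕ} (h : lerchh n = 2) : (lerchA n).Nonempty := by
  rw [nonempty_iff_ne_empty]
  intro hA
  have := card_lerchB_add_card_lerchC_le_one n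
  simp only [lerchh, hA, card_empty] at h
  omega

theorem card_sigma_range_Ico_one_mul_two (m : ℕ) :
    #((range (m + 1)).sigma fun x => Ico 1 x) * 2 = m * (m - 1) := by
  rw [card_sigma, sum_range_succ', ← sum_range_id_mul_two]
  simp

theorem filter_lerchh_eq_two_subset_image (N : ℕ) :
    (Icc 1 N).filter (fun n => lerchh n = 2) ⊆
      ((range (N.sqrt + 1)).sigma fun x => Ico 1 x).image fun p => p.1 * (p.1 + p.2) := by
  intro n hn
  rw [mem_filter, mem_Icc] at hn
  obtain ⟨⟨x, y⟩, hxy⟩ := lerchA_nonempty_of_lerchh_eq_two hn.2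
  simp only [lerchA, mem_filter] at hxy
  obtain ⟨-, -, hy, hyx, rfl⟩ := hxy
  have hxN : x * x ≤ N := le_trans (Nat.mul_le_mul_left x (Nat.le_add_right x y)) hn.1.2
  refine mem_image.2 ⟨⟨x, y⟩, ?_, rfl⟩
  simp only [mem_sigma, mem_range, mem_Ico]
  exact ⟨Nat.lt_succ_of_le (Nat.le_sqrt.2 hxN), hy, by omega⟩

theorem two_mul_card_filter_lerchh_eq_two_le (N : ℕ) :
    2 * #((Icc 1 N).filter fun n => lerchh n = 2) ≤ N := by
  have hcard := (card_le_card (filter_lerchh_eq_two_subset_image N)).trans card_image_le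
  have hs := card_sigma_range_Ico_one_mul_two N.sqrt
  have hsN : N.sqrt * (N.sqrt - 1) ≤ N :=
    (Nat.mul_le_mul_left _ (Nat.sub_le _ 1)).trans (Nat.sqrt_le N)
  omega

/-- For every real `X > 0`, `#{1 ≤ n ≤ X : h(n) = 2} < X/2 + (3/2 + √2)√X + 1 + 3√2/2`. -/
theorem card_h_eq_two_lt (X : ℝ) (hX : 0 < X) :
    (((Finset.Icc 1 ⌊X⌋₊).filter (fun n => lerchh n = 2)).card : ℝ)
      < X / 2 + (3 / 2 + Real.sqrt 2) * Real.sqrt X + 1 + 3 * Real.sqrt 2 / 2 := by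
  have hcount : (2 * #((Icc 1 ⌊X⌋₊).filter fun n => lerchh n = 2) : ℝ) ≤ ⌊X⌋₊ := by
    exact_mod_cast two_mul_card_filter_lerchh_eq_two_le ⌊X⌋₊
  have hfloor : (⌊X⌋₊ : ℝ) ≤ X := Nat.floor_le hX.le
  have hpos : 0 < (3 / 2 + Real.sqrt 2) * Real.sqrt X + 1 + 3 * Real.sqrt 2 / 2 := by positivity
  linarith
end

section
/- If p₁ and p₂ are odd primes with p₁ < p₂ < √2 · p₁, then h(p₁²·p₂²) = 3. -/
theorem mem_lerchA_iff {n x y : ℕ} :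
    (x, y) ∈ lerchA n ↔ 0 < y ∧ y < x ∧ n = x * (x + y) := by
  simp only [lerchA, Finset.mem_filter, Finset.mem_product, Finset.mem_range]
  constructor
  · rintro ⟨-, -, hy, hyx, hn⟩
    exact ⟨hy, by omega, hn⟩
  · rintro ⟨hy, hyx, rfl⟩
    refine ⟨⟨?_, ?_⟩, by omega, hy, by omega, rfl⟩ <;> nlinarith

theorem card_lerchA (n : ℕ) :
    (lerchA n).card = (n.divisors.filter fun x => x ^ 2 < n ∧ n < 2 * x ^ 2).card := by
  refine Finset.card_nbij' Prod.fst (fun x => (x, n / x - x)) ?_ ?_ ?_ ?_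
  · rintro ⟨x, y⟩ h
    obtain ⟨hy, hyx, rfl⟩ := mem_lerchA_iff.mp h
    simp only [Finset.coe_filter, Set.mem_ofPred_eq, Nat.mem_divisors]
    refine ⟨⟨dvd_mul_right _ _, by nlinarith⟩, by nlinarith, by nlinarith⟩
  · intro x h
    simp only [Finset.coe_filter, Set.mem_ofPred_eq, Nat.mem_divisors] at h
    obtain ⟨⟨⟨k, rfl⟩, hn⟩, hlo, hhi⟩ := h
    have hx : 0 < x := Nat.pos_of_ne_zero (by rintro rfl; simp at hn)
    have hxk : x < k := by nlinarith
    have hkx : k < 2 * x := by nlinarith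
    show (x, x * k / x - x) ∈ lerchA (x * k)
    rw [Nat.mul_div_cancel_left _ hx, mem_lerchA_iff]
    exact ⟨by omega, by omega, by rw [Nat.add_sub_cancel' hxk.le]⟩
  · rintro ⟨x, y⟩ h
    obtain ⟨hy, hyx, rfl⟩ := mem_lerchA_iff.mp h
    simp [Nat.mul_div_cancel_left _ (hy.trans hyx)]
  · exact fun _ _ => rfl

theorem lerchB_sq {m : ℕ} (hm : 0 < m) : lerchB (m ^ 2) = {m} := by
  ext x
  simp only [lerchB, Finset.mem_filter, Finset.mem_range, Finset.mem_singleton]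
  constructor
  · rintro ⟨-, -, h⟩
    exact (Nat.pow_left_injective two_ne_zero h).symm
  · rintro rfl
    exact ⟨by nlinarith, hm, rfl⟩

theorem lerchC_sq (m : ℕ) : lerchC (m ^ 2) = ∅ := by
  ext x
  simp only [lerchC, Finset.mem_filter, Finset.notMem_empty, iff_false, not_and]
  intro _ hx h
  have key : 2 * m.factorization 2 = 1 + 2 * x.factorization 2 := by
    simpa [Nat.factorization_mul, hx.ne', Nat.prime_two.factorization_self] using
      congrArg (·.factorization 2) h
  omega

theorem eq_sq_of_dvd_sq_mul_sq {p q x : ℕ} (hp : p.Prime) (hq : q.Prime) (hpq : p < q)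
    (hx : x ∣ (p * q) ^ 2) (hlo : x ^ 2 < (p * q) ^ 2) (hhi : (p * q) ^ 2 < 2 * x ^ 2) :
    x = p ^ 2 := by
  obtain ⟨a, b, ha, hb, rfl⟩ := Nat.dvd_mul.mp (mul_pow p q 2 ▸ hx)
  obtain ⟨i, hi, rfl⟩ := (Nat.dvd_prime_pow hp).mp ha
  obtain ⟨j, hj, rfl⟩ := (Nat.dvd_prime_pow hq).mp hb
  have hlt : p ^ i * q ^ j < p * q := lt_of_pow_lt_pow_left₀ 2 (by positivity) hlo
  have h2p := hp.two_le
  interval_cases i <;> interval_cases j <;> nlinarith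

theorem divisors_filter_sq_mul_sq {p q : ℕ} (hp : p.Prime) (hq : q.Prime) (hpq : p < q)
    (hqp : q ^ 2 < 2 * p ^ 2) :
    ((p * q) ^ 2).divisors.filter (fun x => x ^ 2 < (p * q) ^ 2 ∧ (p * q) ^ 2 < 2 * x ^ 2) =
      {p ^ 2} := by
  ext x
  simp only [Finset.mem_filter, Nat.mem_divisors, Finset.mem_singleton]
  constructor
  · rintro ⟨⟨hx, -⟩, hlo, hhi⟩
    exact eq_sq_of_dvd_sq_mul_sq hp hq hpq hx hlo hhi
  · rintro rfl
    have := hp.pos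
    have := hq.pos
    have hpp : p ^ 2 < p * q := by nlinarith
    exact ⟨⟨mul_pow p q 2 ▸ dvd_mul_right _ _, by positivity⟩,
      Nat.pow_lt_pow_left hpp two_ne_zero, by nlinarith⟩

theorem sq_lt_two_mul_sq_of_lt_sqrt_two_mul {p q : ℕ} (h : (q : ℝ) < √2 * p) :
    q ^ 2 < 2 * p ^ 2 := by
  rw [← Real.sqrt_sq (Nat.cast_nonneg p), ← Real.sqrt_mul zero_le_two,
    Real.lt_sqrt (Nat.cast_nonneg q)] at h
  exact_mod_cast h

theorem h_prod_sq_close_general (p₁ p₂ : ℕ) (hp₁ : p₁.Prime)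
    (hp₂ : p₂.Prime) (hlt : p₁ < p₂)
    (hlt2 : (p₂ : ℝ) < Real.sqrt 2 * p₁) :
    lerchh (p₁ ^ 2 * p₂ ^ 2) = 3 := by
  rw [← mul_pow, lerchh, card_lerchA,
    divisors_filter_sq_mul_sq hp₁ hp₂ hlt (sq_lt_two_mul_sq_of_lt_sqrt_two_mul hlt2),
    lerchB_sq (Nat.mul_pos hp₁.pos hp₂.pos), lerchC_sq]
  rfl

/-- If `p₁` and `p₂` are odd primes with `p₁ < p₂ < √2·p₁`, then `h(p₁²·p₂²) = 3`. -/
theorem h_prod_sq_close (p₁ p₂ : ℕ) (hp₁ : p₁.Prime) (hodd₁ : Odd p₁)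
    (hp₂ : p₂.Prime) (hodd₂ : Odd p₂) (hlt : p₁ < p₂)
    (hlt2 : (p₂ : ℝ) < Real.sqrt 2 * p₁) :
    lerchh (p₁ ^ 2 * p₂ ^ 2) = 3 :=
  h_prod_sq_close_general p₁ p₂ hp₁ hp₂ hlt hlt2
end
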